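/- arXiv:2208.04115 — 5 statements merged into one kernel-verified Lean document; each statement's English description precedes it below -/
import Mathlib

section
/- Let Φ : {0,1}^n → ℝ be antitone with respect to the componentwise partial order (i.e., w¹ ≥ w² implies Φ(w¹) ≤ Φ(w²)), and let Φ̲ ≤ Φ(w) for all w. Define ρ(w', w) = Σ_{i : w'_i = 0} w_i. Then for all binary w, w': Φ(w) ≥ Φ(w') - (Φ(w') - Φ̲)·ρ(w', w), and Φ(w) = Φ(w) - (Φ(w) - Φ̲)·ρ(w, w). -/
open Finset

/-- `ρ(w', w) = Σ_{i : w'_i = 0} w_i`. -/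
noncomputable def rhoDist {n : ℕ} (w' w : Fin n → ℝ) : ℝ :=
  ∑ i ∈ univ.filter (fun i => w' i = 0), w i

lemma rhoDist_self {n : ℕ} (w : Fin n → ℝ) : rhoDist w w = 0 := by
  unfold rhoDist
  apply Finset.sum_eq_zero
  intro i hi
  exact (Finset.mem_filter.mp hi).2

theorem stmt2 {n : ℕ} (Φ : (Fin n → ℝ) → ℝ) (Φlb : ℝ)
    (hanti : ∀ w1 w2 : Fin n → ℝ, (∀ i, w1 i = 0 ∨ w1 i = 1) →
      (∀ i, w2 i = 0 ∨ w2 i = 1) → (∀ i, w2 i ≤ w1 i) → Φ w1 ≤ Φ w2)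
    (hlb : ∀ w : Fin n → ℝ, (∀ i, w i = 0 ∨ w i = 1) → Φlb ≤ Φ w) :
    ∀ w w' : Fin n → ℝ, (∀ i, w i = 0 ∨ w i = 1) → (∀ i, w' i = 0 ∨ w' i = 1) →
      Φ w ≥ Φ w' - (Φ w' - Φlb) * rhoDist w' w ∧
      Φ w = Φ w - (Φ w - Φlb) * rhoDist w w := by
  intro w w' hw hw'
  constructor
  · by_cases hall : ∀ i ∈ univ.filter (fun i => w' i = 0), w i = 0
    · have hrho : rhoDist w' w = 0 := Finset.sum_eq_zero hall
      rw [hrho, mul_zero, sub_zero]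
      apply hanti w' w hw' hw
      intro i
      rcases hw' i with h0 | h1
      · have : w i = 0 := hall i (Finset.mem_filter.mpr ⟨Finset.mem_univ i, h0⟩)
        rw [this, h0]
      · rw [h1]
        rcases hw i with h | h <;> rw [h] <;> norm_num
    · push_neg at hall
      obtain ⟨j, hj, hjne⟩ := hall
      have hj1 : w j = 1 := (hw j).resolve_left hjne
      have hrho : (1 : ℝ) ≤ rhoDist w' w := by
        unfold rhoDist
        calc (1:ℝ) = w j := hj1.symm
        _ ≤ _ := Finset.single_le_sum (f := w)
            (fun i _ => by rcases hw i with h | h <;> simp [h]) hj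
      have h1 : Φlb ≤ Φ w' := hlb w' hw'
      have h2 : Φlb ≤ Φ w := hlb w hw
      nlinarith
  · rw [rhoDist_self, mul_zero, sub_zero]
end

section
/- Let Ξ ⊆ ℝ^N be a nonempty finite set, Y a nonempty finite set, and P a linear map such that each y ∈ Y gives the cost ξ ↦ ξᵀP y, and for a binary vector w define Ξ(w, ξ̄) = {ξ ∈ Ξ : w ∘ ξ = w ∘ ξ̄}. Define Φ(w) = max_{ξ̄ ∈ Ξ} min_{y ∈ Y} max_{ξ ∈ Ξ(w, ξ̄)} ξᵀP y. If w¹ ≥ w² componentwise, then Φ(w¹) ≤ Φ(w²). -/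
private def innerSet {N M : ℕ} (Ξ : Finset (Fin N → ℝ)) (P : Matrix (Fin N) (Fin M) ℝ)
    (w ξb : Fin N → ℝ) (y : Fin M → ℝ) : Set ℝ :=
  {c | ∃ ξ ∈ Ξ, (∀ i, w i * ξ i = w i * ξb i) ∧ c = ∑ i, ∑ j, ξ i * P i j * y j}

private def midSet {N M : ℕ} (Ξ : Finset (Fin N → ℝ)) (Y : Finset (Fin M → ℝ))
    (P : Matrix (Fin N) (Fin M) ℝ) (w ξb : Fin N → ℝ) : Set ℝ :=
  {u | ∃ y ∈ Y, u = sSup (innerSet Ξ P w ξb y)}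

theorem stmt5 {N M : ℕ} (Ξ : Finset (Fin N → ℝ)) (hΞ : Ξ.Nonempty)
    (Y : Finset (Fin M → ℝ)) (hY : Y.Nonempty)
    (P : Matrix (Fin N) (Fin M) ℝ)
    (Φ : (Fin N → ℝ) → ℝ)
    (hΦ : ∀ w : Fin N → ℝ,
      Φ w = sSup {v | ∃ ξb ∈ Ξ, v = sInf {u | ∃ y ∈ Y,
        u = sSup {c | ∃ ξ ∈ Ξ, (∀ i, w i * ξ i = w i * ξb i) ∧
          c = ∑ i, ∑ j, ξ i * P i j * y j}}})
    (w1 w2 : Fin N → ℝ)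
    (hb1 : ∀ i, w1 i = 0 ∨ w1 i = 1) (hb2 : ∀ i, w2 i = 0 ∨ w2 i = 1)
    (hge : ∀ i, w2 i ≤ w1 i) :
    Φ w1 ≤ Φ w2 := by
  classical
  have hAfin : ∀ w ξb y, (innerSet Ξ P w ξb y).Finite := by
    intro w ξb y
    apply Set.Finite.subset (Ξ.finite_toSet.image (fun ξ => ∑ i, ∑ j, ξ i * P i j * y j))
    rintro c ⟨ξ, hξ, -, rfl⟩
    exact ⟨ξ, hξ, rfl⟩
  have hAne : ∀ w ξb y, ξb ∈ Ξ → (innerSet Ξ P w ξb y).Nonempty :=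
    fun w ξb y h => ⟨_, ξb, h, fun i => rfl, rfl⟩
  have hBfin : ∀ w ξb, (midSet Ξ Y P w ξb).Finite := by
    intro w ξb
    apply Set.Finite.subset (Y.finite_toSet.image (fun y => sSup (innerSet Ξ P w ξb y)))
    rintro u ⟨y, hy, rfl⟩
    exact ⟨y, hy, rfl⟩
  have hBne : ∀ w ξb, (midSet Ξ Y P w ξb).Nonempty := by
    intro w ξb
    obtain ⟨y, hy⟩ := hY
    exact ⟨_, y, hy, rfl⟩
  have hsub : ∀ ξb y, innerSet Ξ P w1 ξb y ⊆ innerSet Ξ P w2 ξb y := by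
    intro ξb y c hc
    obtain ⟨ξ, hξ, hcon, rfl⟩ := hc
    refine ⟨ξ, hξ, fun i => ?_, rfl⟩
    rcases hb2 i with h2 | h2
    · simp [h2]
    · have h1 : w1 i = 1 := by
        rcases hb1 i with h | h
        · have := hge i; rw [h2, h] at this; linarith
        · exact h
      have hc := hcon i
      rw [h1] at hc
      rw [h2]
      simpa using hc
  have hAle : ∀ ξb y, ξb ∈ Ξ →
      sSup (innerSet Ξ P w1 ξb y) ≤ sSup (innerSet Ξ P w2 ξb y) := by
    intro ξb y hξb
    exact csSup_le_csSup (hAfin w2 ξb y).bddAbove (hAne w1 ξb y hξb) (hsub ξb y)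
  have hBle : ∀ ξb, ξb ∈ Ξ → sInf (midSet Ξ Y P w1 ξb) ≤ sInf (midSet Ξ Y P w2 ξb) := by
    intro ξb hξb
    apply le_csInf (hBne w2 ξb)
    rintro u ⟨y, hy, rfl⟩
    calc sInf (midSet Ξ Y P w1 ξb) ≤ sSup (innerSet Ξ P w1 ξb y) :=
          csInf_le (hBfin w1 ξb).bddBelow ⟨y, hy, rfl⟩
      _ ≤ sSup (innerSet Ξ P w2 ξb y) := hAle ξb y hξb
  rw [hΦ w1, hΦ w2]
  show sSup {v | ∃ ξb ∈ Ξ, v = sInf (midSet Ξ Y P w1 ξb)} ≤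
       sSup {v | ∃ ξb ∈ Ξ, v = sInf (midSet Ξ Y P w2 ξb)}
  have hOfin : {v | ∃ ξb ∈ Ξ, v = sInf (midSet Ξ Y P w2 ξb)}.Finite := by
    apply Set.Finite.subset (Ξ.finite_toSet.image (fun ξb => sInf (midSet Ξ Y P w2 ξb)))
    rintro v ⟨ξb, h, rfl⟩; exact ⟨ξb, h, rfl⟩
  apply csSup_le
  · obtain ⟨ξb, hξb⟩ := hΞ
    exact ⟨_, ξb, hξb, rfl⟩
  rintro v ⟨ξb, hξb, rfl⟩
  exact le_trans (hBle ξb hξb) (le_csSup hOfin.bddAbove ⟨ξb, hξb, rfl⟩)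
end

section
/- Let Ξ = {ξ ∈ ℝ³ : ξ ≥ 0, ξ₁ + ξ₂ + ξ₃ = 1} and Y = {(0,0,0), (1,1,0), (0,1,1), (1,0,0), (0,1,0), (0,0,1)} ⊆ {0,1}³. For w = (1,0,0), define Ξ(w, ξ̄) = {ξ ∈ Ξ : ξ₁ = ξ̄₁}. Then min_{ξ̄ ∈ Ξ} max_{y ∈ Y} min_{ξ ∈ Ξ(w, ξ̄)} ξᵀy = 1/2. -/
/-!
Reading `ξ₁` first is worth `1/2` to the decision maker: if `ξ₁ ≥ 1/2` the route `(1,0,0)`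
collects `ξ₁`, otherwise the route `(0,1,1)` collects `ξ₂ + ξ₃ = 1 - ξ₁`, so either way at
least `1/2`. Conversely, after revealing `ξ₁ = 1/2` the adversary answers every route with
`(1/2, 1/2, 0)` or `(1/2, 0, 1/2)`, and no route collects more than `1/2` against both.
-/

open Finset

namespace SensorRouting

section General

variable {ι : Type*} [Fintype ι]

/-- The adversary's best reply to route `y` once coordinate `k` of the scenario is revealed
to equal `ξb k`. -/
noncomputable def worstCaseReward (k : ι) (ξb y : ι → ℝ) : ℝ :=
  sInf {c | ∃ ξ ∈ stdSimplex ℝ ι, ξ k = ξb k ∧ c = ∑ i, ξ i * y i}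

/-- The reward the decision maker can guarantee by choosing a route in `Y` after reading
coordinate `k` of `ξb`. -/
noncomputable def guaranteedReward (Y : Set (ι → ℝ)) (k : ι) (ξb : ι → ℝ) : ℝ :=
  sSup {u | ∃ y ∈ Y, u = worstCaseReward k ξb y}

variable {k : ι} {ξ ξb y : ι → ℝ} {Y : Set (ι → ℝ)} {a : ℝ}

theorem worstCaseReward_le (hy : 0 ≤ y) (hξ : ξ ∈ stdSimplex ℝ ι) (hk : ξ k = ξb k) :
    worstCaseReward k ξb y ≤ ∑ i, ξ i * y i := by
  refine csInf_le ⟨0, ?_⟩ ⟨ξ, hξ, hk, rfl⟩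
  rintro c ⟨η, hη, -, rfl⟩
  exact sum_nonneg fun i _ => mul_nonneg (hη.1 i) (hy i)

theorem le_worstCaseReward (hξb : ξb ∈ stdSimplex ℝ ι)
    (h : ∀ ξ ∈ stdSimplex ℝ ι, ξ k = ξb k → a ≤ ∑ i, ξ i * y i) :
    a ≤ worstCaseReward k ξb y := by
  refine le_csInf ⟨_, ξb, hξb, rfl, rfl⟩ ?_
  rintro c ⟨ξ, hξ, hk, rfl⟩
  exact h ξ hξ hk

theorem le_guaranteedReward (hY : Y.Finite) (hy : y ∈ Y) (h : a ≤ worstCaseReward k ξb y) :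
    a ≤ guaranteedReward Y k ξb := by
  have hbdd : BddAbove {u | ∃ y ∈ Y, u = worstCaseReward k ξb y} :=
    (hY.image (worstCaseReward k ξb)).bddAbove.mono <| by
      rintro _ ⟨y, hy, rfl⟩
      exact ⟨y, hy, rfl⟩
  exact h.trans (le_csSup hbdd ⟨y, hy, rfl⟩)

theorem guaranteedReward_le (hY : Y.Nonempty) (h : ∀ y ∈ Y, worstCaseReward k ξb y ≤ a) :
    guaranteedReward Y k ξb ≤ a := by
  obtain ⟨y₀, hy₀⟩ := hY
  refine csSup_le ⟨_, y₀, hy₀, rfl⟩ ?_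
  rintro u ⟨y, hy, rfl⟩
  exact h y hy

end General

def routes : Set (Fin 3 → ℝ) :=
  {![0,0,0], ![1,1,0], ![0,1,1], ![1,0,0], ![0,1,0], ![0,0,1]}

theorem routes_finite : routes.Finite := by
  simp [routes]

theorem nonneg_of_mem_routes {y : Fin 3 → ℝ} (hy : y ∈ routes) : 0 ≤ y := by
  simp only [routes, Set.mem_insert_iff, Set.mem_singleton_iff] at hy
  rcases hy with rfl | rfl | rfl | rfl | rfl | rfl <;> intro i <;> fin_cases i <;> norm_num

theorem vecCons_mem_stdSimplex {a b c : ℝ} (ha : 0 ≤ a) (hb : 0 ≤ b) (hc : 0 ≤ c)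
    (h : a + b + c = 1) : ![a, b, c] ∈ stdSimplex ℝ (Fin 3) :=
  ⟨fun i => by fin_cases i <;> assumption, by simpa [Fin.sum_univ_three] using h⟩

theorem sum_eq_of_mem_stdSimplex {ξ : Fin 3 → ℝ} (hξ : ξ ∈ stdSimplex ℝ (Fin 3)) :
    ξ 0 + ξ 1 + ξ 2 = 1 := by
  simpa [Fin.sum_univ_three] using hξ.2

theorem exists_route_half_le (ξb : Fin 3 → ℝ) :
    ∃ y ∈ routes, ∀ ξ ∈ stdSimplex ℝ (Fin 3), ξ 0 = ξb 0 → 1 / 2 ≤ ∑ i, ξ i * y i := by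
  rcases le_or_gt (1 / 2) (ξb 0) with h | h
  · refine ⟨![1,0,0], by simp [routes], fun ξ _ hk => ?_⟩
    simpa [Fin.sum_univ_three, hk] using h
  · refine ⟨![0,1,1], by simp [routes], fun ξ hξ hk => ?_⟩
    have := sum_eq_of_mem_stdSimplex hξ
    simp only [Fin.sum_univ_three, Matrix.cons_val, mul_zero, mul_one, zero_add]
    linarith

theorem exists_stdSimplex_le_half {y : Fin 3 → ℝ} (hy : y ∈ routes) :
    ∃ ξ ∈ stdSimplex ℝ (Fin 3), ξ 0 = 1 / 2 ∧ ∑ i, ξ i * y i ≤ 1 / 2 := by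
  have h₁ : ![1 / 2, 1 / 2, 0] ∈ stdSimplex ℝ (Fin 3) :=
    vecCons_mem_stdSimplex (by norm_num) (by norm_num) le_rfl (by norm_num)
  have h₂ : ![1 / 2, 0, 1 / 2] ∈ stdSimplex ℝ (Fin 3) :=
    vecCons_mem_stdSimplex (by norm_num) le_rfl (by norm_num) (by norm_num)
  simp only [routes, Set.mem_insert_iff, Set.mem_singleton_iff] at hy
  rcases hy with rfl | rfl | rfl | rfl | rfl | rfl
  on_goal 2 => exact ⟨_, h₂, rfl, by simp [Fin.sum_univ_three, Matrix.cons_val]⟩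
  all_goals exact ⟨_, h₁, rfl, by simp [Fin.sum_univ_three, Matrix.cons_val]⟩

theorem half_le_guaranteedReward_routes {ξb : Fin 3 → ℝ} (hξb : ξb ∈ stdSimplex ℝ (Fin 3)) :
    1 / 2 ≤ guaranteedReward routes 0 ξb := by
  obtain ⟨y, hy, h⟩ := exists_route_half_le ξb
  exact le_guaranteedReward routes_finite hy (le_worstCaseReward hξb h)

theorem guaranteedReward_routes_le_half : guaranteedReward routes 0 ![1 / 2, 1 / 2, 0] ≤ 1 / 2 := by
  refine guaranteedReward_le ⟨_, Set.mem_insert _ _⟩ fun y hy => ?_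
  obtain ⟨ξ, hξ, hk, hle⟩ := exists_stdSimplex_le_half hy
  exact (worstCaseReward_le (nonneg_of_mem_routes hy) hξ (by simp [hk])).trans hle

end SensorRouting

open SensorRouting in
theorem stmt13 :
    sInf {v | ∃ ξb : Fin 3 → ℝ, ((∀ i, 0 ≤ ξb i) ∧ (∑ i, ξb i) = 1) ∧
      v = sSup {u | ∃ y ∈ ({![0,0,0], ![1,1,0], ![0,1,1], ![1,0,0], ![0,1,0], ![0,0,1]} :
          Set (Fin 3 → ℝ)),
        u = sInf {c | ∃ ξ : Fin 3 → ℝ, ((∀ i, 0 ≤ ξ i) ∧ (∑ i, ξ i) = 1) ∧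
          ξ 0 = ξb 0 ∧ c = ∑ i, ξ i * y i}}} = 1 / 2 := by
  change sInf {v | ∃ ξb ∈ stdSimplex ℝ (Fin 3), v = guaranteedReward routes 0 ξb} = 1 / 2
  have hξ₀ : ![1 / 2, 1 / 2, 0] ∈ stdSimplex ℝ (Fin 3) :=
    vecCons_mem_stdSimplex (by norm_num) (by norm_num) le_rfl (by norm_num)
  have hval : guaranteedReward routes 0 ![1 / 2, 1 / 2, 0] = 1 / 2 :=
    le_antisymm guaranteedReward_routes_le_half (half_le_guaranteedReward_routes hξ₀)
  refine IsLeast.csInf_eq ⟨⟨_, hξ₀, hval.symm⟩, ?_⟩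
  rintro v ⟨ξb, hξb, rfl⟩
  exact half_le_guaranteedReward_routes hξb
end

section
/- Let f : Ξ × Y → ℝ with Ξ nonempty and Y nonempty finite. Consider the iterative procedure: start with any nonempty Ŷ₀ ⊆ Y; at step t, choose ξ̄_t maximizing min_{y ∈ Ŷ_t} f(·, y) over Ξ, let y_t ∈ argmin_{y ∈ Y} f(ξ̄_t, y); if min_{y ∈ Ŷ_t} f(ξ̄_t, y) = f(ξ̄_t, y_t) stop, else set Ŷ_{t+1} = Ŷ_t ∪ {y_t}. Then the procedure terminates after at most |Y| iterations, and upon termination min_{y ∈ Ŷ_t} f(ξ̄_t, y) = max_{ξ̄ ∈ Ξ} min_{y ∈ Y} f(ξ̄, y). -/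
/-- Finite convergence of the column-and-constraint generation algorithm.
`Yh t` is the working subset at step `t`, `xb t` a maximizer of the relaxed
max-min over `Ξ` (here the type `X`), and `ys t` a minimizer over the full `Y`. -/
theorem stmt16 {X Y : Type*} [Nonempty X] [Fintype Y] [Nonempty Y] [DecidableEq Y]
    (f : X → Y → ℝ)
    (Yh : ℕ → Finset Y) (xb : ℕ → X) (ys : ℕ → Y)
    (h0 : (Yh 0).Nonempty)
    (hstep : ∀ t, Yh (t + 1) = Yh t ∪ {ys t})
    (hmax : ∀ t, ∀ x : X,
      sInf {v | ∃ y ∈ Yh t, v = f x y} ≤ sInf {v | ∃ y ∈ Yh t, v = f (xb t) y})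
    (hmin : ∀ t, ∀ y : Y, f (xb t) (ys t) ≤ f (xb t) y) :
    ∃ t ≤ Fintype.card Y,
      sInf {v | ∃ y ∈ Yh t, v = f (xb t) y} = f (xb t) (ys t) ∧
      sInf {v | ∃ y ∈ Yh t, v = f (xb t) y} =
        sSup {v | ∃ x : X, v = sInf {u | ∃ y : Y, u = f x y}} := by
  -- the working sets are nonempty
  have hne : ∀ t, (Yh t).Nonempty := by
    intro t
    induction t with
    | zero => exact h0
    | succ t ih => rw [hstep t]; exact ih.mono Finset.subset_union_left
  -- identify the sets with finset images
  have hS : ∀ t (x : X), {v | ∃ y ∈ Yh t, v = f x y} = ↑((Yh t).image (f x)) := by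
    intro t x; ext v; simp [eq_comm]
  have hSU : ∀ x : X, {u | ∃ y : Y, u = f x y} = ↑((Finset.univ : Finset Y).image (f x)) := by
    intro x; ext v; simp [eq_comm]
  have hneI : ∀ t (x : X), ((Yh t).image (f x)).Nonempty := fun t x => (hne t).image _
  have hInf : ∀ t (x : X),
      sInf {v | ∃ y ∈ Yh t, v = f x y} = ((Yh t).image (f x)).min' (hneI t x) := by
    intro t x; rw [hS]; exact (hneI t x).csInf_eq_min'
  have hneU : ∀ x : X, ((Finset.univ : Finset Y).image (f x)).Nonempty :=
    fun x => Finset.univ_nonempty.image _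
  have hInfU : ∀ x : X,
      sInf {u | ∃ y : Y, u = f x y} = ((Finset.univ : Finset Y).image (f x)).min' (hneU x) := by
    intro x; rw [hSU]; exact (hneU x).csInf_eq_min'
  -- sInf S_t ≥ f (xb t) (ys t) always
  have hge : ∀ t, f (xb t) (ys t) ≤ sInf {v | ∃ y ∈ Yh t, v = f (xb t) y} := by
    intro t
    rw [hInf]
    obtain ⟨v, hv, hv2⟩ := Finset.mem_image.1 (Finset.min'_mem _ (hneI t (xb t)))
    rw [← hv2]; exact hmin t v
  -- if the stopping condition fails, ys t is new
  have hnotmem : ∀ t, sInf {v | ∃ y ∈ Yh t, v = f (xb t) y} ≠ f (xb t) (ys t) →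
      ys t ∉ Yh t := by
    intro t hne' hmem
    apply hne'
    refine le_antisymm ?_ (hge t)
    rw [hInf]
    exact Finset.min'_le _ _ (Finset.mem_image_of_mem _ hmem)
  -- termination : there is t ≤ card Y with the stopping condition
  have hterm : ∃ t ≤ Fintype.card Y, sInf {v | ∃ y ∈ Yh t, v = f (xb t) y} = f (xb t) (ys t) := by
    by_contra h
    push_neg at h
    have hcard : ∀ t ≤ Fintype.card Y, t + 1 ≤ (Yh t).card := by
      intro t
      induction t with
      | zero => intro _; exact Finset.Nonempty.card_pos h0
      | succ t ih =>
        intro ht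
        have ht' : t ≤ Fintype.card Y := Nat.le_of_succ_le ht
        have hnm := hnotmem t (h t ht')
        have : (Yh (t + 1)).card = (Yh t).card + 1 := by
          rw [hstep t, Finset.union_comm, ← Finset.insert_eq, Finset.card_insert_of_notMem hnm]
        omega
    have h1 := hcard (Fintype.card Y) le_rfl
    have h2 : (Yh (Fintype.card Y)).card ≤ Fintype.card Y := Finset.card_le_univ _
    omega
  obtain ⟨t, ht, hP⟩ := hterm
  refine ⟨t, ht, hP, ?_⟩
  -- the inf over Yh t at xb t equals the full min at xb t
  have hfull : sInf {u | ∃ y : Y, u = f (xb t) y} = f (xb t) (ys t) := by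
    refine le_antisymm ?_ ?_
    · rw [hInfU]; exact Finset.min'_le _ _ (Finset.mem_image_of_mem _ (Finset.mem_univ _))
    · rw [hInfU]
      obtain ⟨v, _, hv2⟩ := Finset.mem_image.1 (Finset.min'_mem _ (hneU (xb t)))
      rw [← hv2]; exact hmin t v
  -- each full min is ≤ sInf S_t
  have hbound : ∀ x : X, sInf {u | ∃ y : Y, u = f x y} ≤ sInf {v | ∃ y ∈ Yh t, v = f (xb t) y} := by
    intro x
    refine le_trans (le_trans ?_ (hmax t x)) le_rfl
    rw [hInfU, hInf]
    obtain ⟨v, hv, hv2⟩ := Finset.mem_image.1 (Finset.min'_mem _ (hneI t x))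
    rw [← hv2]
    exact Finset.min'_le _ _ (Finset.mem_image_of_mem _ (Finset.mem_univ v))
  have hmemset : sInf {v | ∃ y ∈ Yh t, v = f (xb t) y} ∈
      {v | ∃ x : X, v = sInf {u | ∃ y : Y, u = f x y}} := by
    exact ⟨xb t, by rw [hfull, hP]⟩
  have hbdd : BddAbove {v | ∃ x : X, v = sInf {u | ∃ y : Y, u = f x y}} := by
    refine ⟨sInf {v | ∃ y ∈ Yh t, v = f (xb t) y}, ?_⟩
    rintro v ⟨x, rfl⟩; exact hbound x
  refine le_antisymm (le_csSup hbdd hmemset) ?_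
  refine csSup_le ⟨_, hmemset⟩ ?_
  rintro v ⟨x, rfl⟩; exact hbound x
end

section
/- Let W be a finite nonempty set of binary vectors and Φ : W → ℝ with lower bound Φ̲. Consider the cutting-plane procedure: maintain Ŵ ⊆ W; solve Θ_Ŵ = min over w ∈ W of max(Φ̲', max_{w' ∈ Ŵ} [Φ(w') − (Φ(w') − Φ̲)·φ(w', w)]), obtaining minimizer w*; if Θ_Ŵ = Φ(w*) stop, else add w* to Ŵ. Then the procedure terminates in at most |W| iterations with w* ∈ argmin_{w ∈ W} Φ(w) and Θ_Ŵ = min_{w ∈ W} Φ(w). -/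
open Finset

/-- Hamming distance between binary vectors. -/
noncomputable def hammDist {n : ℕ} (w' w : Fin n → ℝ) : ℝ :=
  ∑ i ∈ univ.filter (fun i => w' i = 1), (1 - w i) +
    ∑ i ∈ univ.filter (fun i => w' i = 0), w i

/-- The relaxed master value `Θ_Ŵ(w) = max(Φ̲, max_{w' ∈ Ŵ} [Φ(w') − (Φ(w') − Φ̲)·φ(w', w)])`. -/
noncomputable def relaxedVal {n : ℕ} (Φ : (Fin n → ℝ) → ℝ) (Φlb : ℝ)
    (Wh : Finset (Fin n → ℝ)) (w : Fin n → ℝ) : ℝ :=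
  sSup ({Φlb} ∪ {v | ∃ w' ∈ Wh, v = Φ w' - (Φ w' - Φlb) * hammDist w' w})

lemma hammDist_self {n : ℕ} (w : Fin n → ℝ) : hammDist w w = 0 := by
  unfold hammDist
  have h1 : ∑ i ∈ univ.filter (fun i => w i = 1), (1 - w i) = 0 :=
    Finset.sum_eq_zero (fun i hi => by
      simp only [Finset.mem_filter] at hi; simp [hi.2])
  have h2 : ∑ i ∈ univ.filter (fun i => w i = 0), w i = 0 :=
    Finset.sum_eq_zero (fun i hi => by
      simp only [Finset.mem_filter] at hi; simp [hi.2])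
  rw [h1, h2, add_zero]

lemma hammDist_ge_one {n : ℕ} {w' w : Fin n → ℝ}
    (hw' : ∀ i, w' i = 0 ∨ w' i = 1) (hw : ∀ i, w i = 0 ∨ w i = 1)
    (hne : w' ≠ w) : 1 ≤ hammDist w' w := by
  have h1 : 0 ≤ ∑ i ∈ univ.filter (fun i => w' i = 1), (1 - w i) := by
    apply Finset.sum_nonneg
    intro i _
    rcases hw i with h | h <;> simp [h]
  have h2 : 0 ≤ ∑ i ∈ univ.filter (fun i => w' i = 0), w i := by
    apply Finset.sum_nonneg
    intro i _
    rcases hw i with h | h <;> simp [h]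
  obtain ⟨i, hi⟩ : ∃ i, w' i ≠ w i := by
    by_contra h; push_neg at h; exact hne (funext h)
  rcases hw' i with hi0 | hi1
  · have hwi : w i = 1 := by
      rcases hw i with h | h
      · exact absurd (hi0.trans h.symm) hi
      · exact h
    have hmemf : i ∈ univ.filter (fun j => w' j = 0) := by simp [hi0]
    have hsingle : w i ≤ ∑ j ∈ univ.filter (fun j => w' j = 0), w j :=
      Finset.single_le_sum (f := fun j => w j)
        (fun j _ => by rcases hw j with h | h <;> simp [h]) hmemf
    unfold hammDist
    rw [hwi] at hsingle
    linarith
  · have hwi : w i = 0 := by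
      rcases hw i with h | h
      · exact h
      · exact absurd (hi1.trans h.symm) hi
    have hmemf : i ∈ univ.filter (fun j => w' j = 1) := by simp [hi1]
    have hsingle : 1 - w i ≤ ∑ j ∈ univ.filter (fun j => w' j = 1), (1 - w j) :=
      Finset.single_le_sum (f := fun j => 1 - w j)
        (fun j _ => by rcases hw j with h | h <;> simp [h]) hmemf
    unfold hammDist
    rw [hwi] at hsingle
    linarith

lemma relaxedVal_set_eq {n : ℕ} (Φ : (Fin n → ℝ) → ℝ) (Φlb : ℝ)
    (Wh : Finset (Fin n → ℝ)) (w : Fin n → ℝ) :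
    ({Φlb} ∪ {v | ∃ w' ∈ Wh, v = Φ w' - (Φ w' - Φlb) * hammDist w' w} : Set ℝ) =
      ↑(insert Φlb (Wh.image (fun w' => Φ w' - (Φ w' - Φlb) * hammDist w' w))) := by
  ext v
  simp only [Set.mem_union, Set.mem_singleton_iff, Set.mem_setOf_eq, Finset.coe_insert,
    Set.mem_insert_iff, Finset.coe_image, Set.mem_image, Finset.mem_coe]
  constructor
  · rintro (rfl | ⟨w', hw', rfl⟩)
    · exact Or.inl rfl
    · exact Or.inr ⟨w', hw', rfl⟩
  · rintro (rfl | ⟨w', hw', rfl⟩)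
    · exact Or.inl rfl
    · exact Or.inr ⟨w', hw', rfl⟩

lemma relaxedVal_bddAbove {n : ℕ} (Φ : (Fin n → ℝ) → ℝ) (Φlb : ℝ)
    (Wh : Finset (Fin n → ℝ)) (w : Fin n → ℝ) :
    BddAbove ({Φlb} ∪ {v | ∃ w' ∈ Wh, v = Φ w' - (Φ w' - Φlb) * hammDist w' w} : Set ℝ) := by
  rw [relaxedVal_set_eq]; exact Finset.bddAbove _

lemma lb_le_relaxedVal {n : ℕ} (Φ : (Fin n → ℝ) → ℝ) (Φlb : ℝ)
    (Wh : Finset (Fin n → ℝ)) (w : Fin n → ℝ) :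
    Φlb ≤ relaxedVal Φ Φlb Wh w :=
  le_csSup (relaxedVal_bddAbove Φ Φlb Wh w) (Or.inl rfl)

lemma Phi_le_relaxedVal_of_mem {n : ℕ} (Φ : (Fin n → ℝ) → ℝ) (Φlb : ℝ)
    (Wh : Finset (Fin n → ℝ)) {w : Fin n → ℝ} (hw : w ∈ Wh) :
    Φ w ≤ relaxedVal Φ Φlb Wh w := by
  apply le_csSup (relaxedVal_bddAbove Φ Φlb Wh w)
  exact Or.inr ⟨w, hw, by rw [hammDist_self]; ring⟩

lemma relaxedVal_le_Phi {n : ℕ} {W : Finset (Fin n → ℝ)}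
    (hWbin : ∀ w ∈ W, ∀ i, w i = 0 ∨ w i = 1)
    (Φ : (Fin n → ℝ) → ℝ) {Φlb : ℝ} (hlb : ∀ w ∈ W, Φlb ≤ Φ w)
    {Wh : Finset (Fin n → ℝ)} (hsub : Wh ⊆ W) {w : Fin n → ℝ} (hw : w ∈ W) :
    relaxedVal Φ Φlb Wh w ≤ Φ w := by
  apply csSup_le ⟨Φlb, Or.inl rfl⟩
  rintro v (rfl | ⟨w', hw', rfl⟩)
  · exact hlb w hw
  · by_cases h : w' = w
    · subst h; rw [hammDist_self]; simp
    · have hd : 1 ≤ hammDist w' w :=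
        hammDist_ge_one (hWbin w' (hsub hw')) (hWbin w hw) h
      have hnn : 0 ≤ Φ w' - Φlb := by linarith [hlb w' (hsub hw')]
      have : (Φ w' - Φlb) * 1 ≤ (Φ w' - Φlb) * hammDist w' w :=
        mul_le_mul_of_nonneg_left hd hnn
      linarith [hlb w hw]

/-- Finite convergence of the Logic Benders cutting-plane procedure
(Theorem 1 of the paper). -/
theorem stmt17 {n : ℕ} (W : Finset (Fin n → ℝ)) (hW : W.Nonempty)
    (hWbin : ∀ w ∈ W, ∀ i, w i = 0 ∨ w i = 1)
    (Φ : (Fin n → ℝ) → ℝ) (Φlb : ℝ) (hlb : ∀ w ∈ W, Φlb ≤ Φ w)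
    (Wh : ℕ → Finset (Fin n → ℝ)) (wst : ℕ → (Fin n → ℝ))
    (h0 : Wh 0 = ∅)
    (hstep : ∀ t, Wh (t + 1) = Wh t ∪ {wst t})
    (hmem : ∀ t, wst t ∈ W)
    (hmin : ∀ t, ∀ w ∈ W, relaxedVal Φ Φlb (Wh t) (wst t) ≤ relaxedVal Φ Φlb (Wh t) w) :
    ∃ t ≤ W.card,
      relaxedVal Φ Φlb (Wh t) (wst t) = Φ (wst t) ∧
      (∀ w ∈ W, Φ (wst t) ≤ Φ w) ∧
      relaxedVal Φ Φlb (Wh t) (wst t) = sInf {v | ∃ w ∈ W, v = Φ w} := by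
  have hsub : ∀ t, Wh t ⊆ W := by
    intro t
    induction t with
    | zero => rw [h0]; exact Finset.empty_subset _
    | succ t ih =>
      rw [hstep t]
      exact Finset.union_subset ih (Finset.singleton_subset_iff.mpr (hmem t))
  -- First, find a terminating t
  have hterm : ∃ t ≤ W.card, relaxedVal Φ Φlb (Wh t) (wst t) = Φ (wst t) := by
    by_contra hc
    push_neg at hc
    have hgrow : ∀ t, t ≤ W.card + 1 → t ≤ (Wh t).card := by
      intro t
      induction t with
      | zero => intro _; exact Nat.zero_le _
      | succ t ih =>
        intro ht
        have ht' : t ≤ W.card := Nat.lt_succ_iff.mp ht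
        have hne := hc t ht'
        have hnotmem : wst t ∉ Wh t := by
          intro hmem'
          exact hne (le_antisymm
            (relaxedVal_le_Phi hWbin Φ hlb (hsub t) (hmem t))
            (Phi_le_relaxedVal_of_mem Φ Φlb (Wh t) hmem'))
        have : Wh (t + 1) = insert (wst t) (Wh t) := by
          rw [hstep t, Finset.union_comm]
          ext x
          simp [or_comm]
        rw [this, Finset.card_insert_of_notMem hnotmem]
        exact Nat.succ_le_succ (ih (le_trans (Nat.le_succ t) ht))
    have h1 := hgrow (W.card + 1) le_rfl
    have h2 := Finset.card_le_card (hsub (W.card + 1))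
    omega
  obtain ⟨t, ht, heq⟩ := hterm
  have hopt : ∀ w ∈ W, Φ (wst t) ≤ Φ w := by
    intro w hw
    calc Φ (wst t) = relaxedVal Φ Φlb (Wh t) (wst t) := heq.symm
    _ ≤ relaxedVal Φ Φlb (Wh t) w := hmin t w hw
    _ ≤ Φ w := relaxedVal_le_Phi hWbin Φ hlb (hsub t) hw
  refine ⟨t, ht, heq, hopt, ?_⟩
  have hseteq : {v | ∃ w ∈ W, v = Φ w} = ↑(W.image Φ) := by
    ext v
    simp only [Set.mem_setOf_eq, Finset.coe_image, Set.mem_image, Finset.mem_coe]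
    constructor
    · rintro ⟨w, hw, rfl⟩; exact ⟨w, hw, rfl⟩
    · rintro ⟨w, hw, rfl⟩; exact ⟨w, hw, rfl⟩
  have hinf : sInf {v | ∃ w ∈ W, v = Φ w} = Φ (wst t) := by
    apply le_antisymm
    · apply csInf_le
      · rw [hseteq]; exact Finset.bddBelow _
      · exact ⟨wst t, hmem t, rfl⟩
    · apply le_csInf
      · exact ⟨Φ (wst t), wst t, hmem t, rfl⟩
      · rintro b ⟨w, hw, rfl⟩
        exact hopt w hw
  rw [heq, hinf]
end
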